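/- arXiv:2404.10562 — 3 statements merged into one kernel-verified Lean document; each statement's English description precedes it below -/
import Mathlib

section
/- Let E be a real normed vector space and N a smooth (1,1) tensor field on E with vanishing Nijenhuis torsion, T(N) = 0. Let a₀, a₁ : E → ℝ be smooth functions satisfying Da₁(x) = Da₀(x) ∘ N(x) for all x ∈ E. Then the 1-form x ↦ Da₁(x) ∘ N(x) is closed. (This is the key step producing the Lenard chain of bi-closed 1-forms ρ_{k+1} = d a_{k+1} = d_N a_k.) -/
/-!
Write `α = da₀`, so that `da₁ = α ∘ N`. Differentiating `da₁ ∘ N` and using the symmetry of the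
second derivatives of `a₀` and `a₁`, the antisymmetric part of `D(da₁ ∘ N)(x)(u)(v)` is
`-α(x)` applied to the Nijenhuis torsion of `N` on the constant vector fields `u` and `v`,
which vanishes.
-/

variable {E : Type*} [NormedAddCommGroup E] [NormedSpace ℝ E]

/-- Lie bracket of vector fields on `E`: `[X,Y](x) = DY(x)(X(x)) − DX(x)(Y(x))`. -/
noncomputable def lie (X Y : E → E) : E → E :=
  fun x => fderiv ℝ Y x (X x) - fderiv ℝ X x (Y x)

/-- Pointwise action of a (1,1) tensor field on a vector field. -/
def app (N : E → E →L[ℝ] E) (X : E → E) : E → E := fun x => N x (X x)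

/-- Pointwise `k`-th power of a (1,1) tensor field. -/
def pw (N : E → E →L[ℝ] E) (k : ℕ) : E → E →L[ℝ] E := fun x => (N x) ^ k

/-- Frölicher–Nijenhuis bracket of two (1,1) tensor fields, evaluated on vector fields. -/
noncomputable def fnBracket (N₁ N₂ : E → E →L[ℝ] E) (X Y : E → E) : E → E :=
  fun x =>
    N₁ x (N₂ x (lie X Y x)) + N₂ x (N₁ x (lie X Y x))
      + lie (app N₁ X) (app N₂ Y) x + lie (app N₂ X) (app N₁ Y) x
      - N₁ x (lie (app N₂ X) Y x + lie X (app N₂ Y) x)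
      - N₂ x (lie (app N₁ X) Y x + lie X (app N₁ Y) x)

/-- Nijenhuis torsion of a (1,1) tensor field, evaluated on vector fields. -/
noncomputable def tor (N : E → E →L[ℝ] E) (X Y : E → E) : E → E :=
  fun x =>
    lie (app N X) (app N Y) x
      + N x (N x (lie X Y x) - lie (app N X) Y x - lie X (app N Y) x)

/-- Haantjes tensor of a (1,1) tensor field, evaluated on vector fields. -/
noncomputable def haan (M : E → E →L[ℝ] E) (X Y : E → E) : E → E :=
  fun x =>
    M x (M x (tor M X Y x)) + tor M (app M X) (app M Y) x
      - M x (tor M (app M X) Y x + tor M X (app M Y) x)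

/-- The bracket `[A,B]_X = [AX,BX] − A[X,BX] + B[X,AX]` of two (1,1) tensor fields
with respect to a vector field `X`. -/
noncomputable def brX (A B : E → E →L[ℝ] E) (X : E → E) : E → E :=
  fun x =>
    lie (app A X) (app B X) x - A x (lie X (app B X) x) + B x (lie X (app A X) x)

/-- A 1-form is closed iff its Fréchet derivative is symmetric. -/
def IsClosedOneForm (ρ : E → E →L[ℝ] ℝ) : Prop :=
  ∀ x u v, fderiv ℝ ρ x u v = fderiv ℝ ρ x v u

open ContinuousLinearMap

lemma fderiv_clm_apply_const {F G : Type*} [NormedAddCommGroup F] [NormedSpace ℝ F]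
    [NormedAddCommGroup G] [NormedSpace ℝ G] {N : E → F →L[ℝ] G} {x : E}
    (hN : DifferentiableAt ℝ N x) (u : F) (w : E) :
    fderiv ℝ (fun y => N y u) x w = fderiv ℝ N x w u := by
  simp [fderiv_clm_apply hN (differentiableAt_const u)]

lemma fderiv_clm_comp_apply_apply {F G H : Type*} [NormedAddCommGroup F] [NormedSpace ℝ F]
    [NormedAddCommGroup G] [NormedSpace ℝ G] [NormedAddCommGroup H] [NormedSpace ℝ H]
    {α : E → G →L[ℝ] H} {N : E → F →L[ℝ] G} {x : E}
    (hα : DifferentiableAt ℝ α x) (hN : DifferentiableAt ℝ N x) (u : E) (v : F) :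
    fderiv ℝ (fun y => (α y).comp (N y)) x u v
      = α x (fderiv ℝ N x u v) + fderiv ℝ α x u (N x v) := by
  simp [fderiv_clm_comp hα hN]

lemma tor_const_apply {N : E → E →L[ℝ] E} {x : E} (hN : DifferentiableAt ℝ N x) (u v : E) :
    tor N (fun _ => u) (fun _ => v) x
      = fderiv ℝ N x (N x u) v - fderiv ℝ N x (N x v) u
        + N x (fderiv ℝ N x v u - fderiv ℝ N x u v) := by
  have happ : ∀ w, app N (fun _ => w) = fun y => N y w := fun _ => rfl
  simp only [tor, lie, happ, fderiv_fun_const, Pi.zero_apply, zero_apply,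
    fderiv_clm_apply_const hN]
  simp only [sub_zero, zero_sub, map_neg, map_sub, map_zero]
  abel

lemma differentiableAt_fderiv_of_contDiffAt_two {F : Type*} [NormedAddCommGroup F]
    [NormedSpace ℝ F] {f : E → F} {x : E} (hf : ContDiffAt ℝ 2 f x) :
    DifferentiableAt ℝ (fderiv ℝ f) x :=
  (hf.fderiv_right (m := 1) (by norm_num)).differentiableAt one_ne_zero

lemma fderiv_comp_sub_swap_eq_neg_tor {N : E → E →L[ℝ] E} {a₀ a₁ : E → ℝ} {x : E}
    (hN : DifferentiableAt ℝ N x) (ha₀ : ContDiffAt ℝ 2 a₀ x) (ha₁ : ContDiffAt ℝ 2 a₁ x)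
    (hchain : ∀ y, fderiv ℝ a₁ y = (fderiv ℝ a₀ y).comp (N y)) (u v : E) :
    fderiv ℝ (fun y => (fderiv ℝ a₁ y).comp (N y)) x u v
        - fderiv ℝ (fun y => (fderiv ℝ a₁ y).comp (N y)) x v u
      = -fderiv ℝ a₀ x (tor N (fun _ => u) (fun _ => v) x) := by
  have hsymm₀ := ha₀.isSymmSndFDerivAt (by simp)
  have hsymm₁ := ha₁.isSymmSndFDerivAt (by simp)
  have hd2a₁ : ∀ w z, fderiv ℝ (fderiv ℝ a₁) x w z
      = fderiv ℝ a₀ x (fderiv ℝ N x w z) + fderiv ℝ (fderiv ℝ a₀) x w (N x z) := by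
    rw [funext hchain]
    exact fderiv_clm_comp_apply_apply (differentiableAt_fderiv_of_contDiffAt_two ha₀) hN
  have hda₁ := differentiableAt_fderiv_of_contDiffAt_two ha₁
  rw [fderiv_clm_comp_apply_apply hda₁ hN, fderiv_clm_comp_apply_apply hda₁ hN,
    hsymm₁ u, hsymm₁ v, hd2a₁, hd2a₁, hsymm₀ (N x v), tor_const_apply hN, hchain]
  simp only [comp_apply, map_add, map_sub]
  ring

theorem stmt4 (N : E → E →L[ℝ] E) (hN : ContDiff ℝ (⊤ : ℕ∞) N)
    (hT : ∀ X Y : E → E, ContDiff ℝ (⊤ : ℕ∞) X → ContDiff ℝ (⊤ : ℕ∞) Y →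
      ∀ x, tor N X Y x = 0)
    (a₀ a₁ : E → ℝ) (ha₀ : ContDiff ℝ (⊤ : ℕ∞) a₀) (ha₁ : ContDiff ℝ (⊤ : ℕ∞) a₁)
    (hchain : ∀ x, fderiv ℝ a₁ x = (fderiv ℝ a₀ x).comp (N x)) :
    IsClosedOneForm (fun x => (fderiv ℝ a₁ x).comp (N x)) := by
  intro x u v
  have h2 : (2 : WithTop ℕ∞) ≤ (⊤ : ℕ∞) := by norm_cast
  have hantisymm := fderiv_comp_sub_swap_eq_neg_tor (hN.differentiable (by simp) x)
    (ha₀.of_le h2).contDiffAt (ha₁.of_le h2).contDiffAt hchain u v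
  rw [hT _ _ contDiff_const contDiff_const x, map_zero, neg_zero, sub_eq_zero] at hantisymm
  exact hantisymm
end

section
/- (Lorenzoni–Magri) Let E be a real normed vector space and N a smooth (1,1) tensor field on E with vanishing Nijenhuis torsion, T(N) = 0. Let a_k : E → ℝ, k = 0,1,2,…, be smooth functions and define (1,1) tensor fields M_k recursively by M_0 = I (the identity) and M_{k+1} = N M_k − a_k·I (pointwise). Assume the chain of conservation laws Da_k(x) = Da_0(x) ∘ M_k(x) holds for all k ≥ 0 and all x ∈ E. Then for all nonnegative integers i, j and every vector field X on E, [M_i, M_j]_X = 0; hence the hydrodynamic-type flows ∂x/∂t_k + M_k(x)(∂x/∂y) = 0 constitute a hierarchy. -/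
/-!
For commuting tensor fields `A`, `B`, the bracket `[A,B]_X` at `x` depends only on `u = X x`,
through the first derivatives of `A` and `B` at `x`. The `M k` are polynomials in `N`, hence
commute, and the resulting first-order expression for `M i`, `M j` vanishes by induction on `i`: the recursion `M (i+1) = N M i - a i` and the conservation laws
`Da_i = Da_0 ∘ M i` reduce the inductive step to a companion identity relating `DM j` and `DN`,
which in turn follows by induction on `j` from `T(N) = 0` on constant vector fields.
-/

variable {E : Type*} [NormedAddCommGroup E] [NormedSpace ℝ E]

theorem fderiv_app_apply {A : E → E →L[ℝ] E} {X : E → E} {x : E}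
    (hA : DifferentiableAt ℝ A x) (hX : DifferentiableAt ℝ X x) (h : E) :
    fderiv ℝ (app A X) x h = A x (fderiv ℝ X x h) + fderiv ℝ A x h (X x) := by
  rw [show app A X = fun y => A y (X y) from rfl, fderiv_clm_apply hA hX]
  simp

theorem brX_eq_of_commute {A B : E → E →L[ℝ] E} {X : E → E} {x : E}
    (hA : DifferentiableAt ℝ A x) (hB : DifferentiableAt ℝ B x) (hX : DifferentiableAt ℝ X x)
    (hAB : Commute (A x) (B x)) :
    brX A B X x = fderiv ℝ B x (A x (X x)) (X x) - fderiv ℝ A x (B x (X x)) (X x)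
      - A x (fderiv ℝ B x (X x) (X x)) + B x (fderiv ℝ A x (X x) (X x)) := by
  have hABX := congr($hAB (fderiv ℝ X x (X x)))
  simp only [mul_apply_eq_comp] at hABX
  simp only [brX, lie, app, fderiv_app_apply hA hX, fderiv_app_apply hB hX, map_add, map_sub]
  linear_combination (norm := module) -hABX

theorem tor_const_const {N : E → E →L[ℝ] E} {x : E} (hN : DifferentiableAt ℝ N x) (v w : E) :
    tor N (fun _ => v) (fun _ => w) x = fderiv ℝ N x (N x v) w - fderiv ℝ N x (N x w) v
      + N x (fderiv ℝ N x w v) - N x (fderiv ℝ N x v w) := by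
  simp only [tor, lie, fderiv_app_apply hN (differentiableAt_const _), fderiv_fun_const,
    Pi.zero_apply, zero_apply, map_zero, app]
  simp only [map_sub, map_add]
  abel

/-- `M k = N ^ k - a 0 • N ^ (k - 1) - ⋯ - a (k - 1) • 1`, evaluated by Horner's scheme. -/
structure IsHornerChain (N : E → E →L[ℝ] E) (a : ℕ → E → ℝ) (M : ℕ → E → E →L[ℝ] E) :
    Prop where
  zero : ∀ x, M 0 x = 1
  succ : ∀ k x, M (k + 1) x = N x * M k x - a k x • 1

namespace IsHornerChain

variable {N : E → E →L[ℝ] E} {a : ℕ → E → ℝ} {M : ℕ → E → E →L[ℝ] E}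

theorem commute_left (hM : IsHornerChain N a M) (k : ℕ) (x : E) : Commute (N x) (M k x) := by
  induction k with
  | zero => rw [hM.zero]; exact Commute.one_right _
  | succ k ih =>
    rw [hM.succ]
    exact ((Commute.refl _).mul_right ih).sub_right ((Commute.one_right _).smul_right (a k x))

theorem commute (hM : IsHornerChain N a M) (i j : ℕ) (x : E) : Commute (M i x) (M j x) := by
  induction i with
  | zero => rw [hM.zero]; exact Commute.one_left _
  | succ i ih =>
    rw [hM.succ]
    exact ((hM.commute_left j x).mul_left ih).sub_left ((Commute.one_left _).smul_left (a i x))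

theorem zero_fun (hM : IsHornerChain N a M) : M 0 = fun _ => 1 :=
  funext hM.zero

theorem succ_fun (hM : IsHornerChain N a M) (k : ℕ) :
    M (k + 1) = fun y => N y * M k y - a k y • 1 :=
  funext (hM.succ k)

theorem fderiv_zero_eq_zero (hM : IsHornerChain N a M) (x : E) : fderiv ℝ (M 0) x = 0 := by
  rw [hM.zero_fun, fderiv_fun_const, Pi.zero_apply]

variable {x : E}

theorem differentiableAt (hM : IsHornerChain N a M) (hN : DifferentiableAt ℝ N x)
    (ha : ∀ k, DifferentiableAt ℝ (a k) x) (k : ℕ) : DifferentiableAt ℝ (M k) x := by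
  induction k with
  | zero => rw [hM.zero_fun]; exact differentiableAt_const _
  | succ k ih => rw [hM.succ_fun]; exact (hN.fun_mul ih).sub ((ha k).smul_const 1)

theorem fderiv_succ_apply (hM : IsHornerChain N a M) (hN : DifferentiableAt ℝ N x)
    (ha : ∀ k, DifferentiableAt ℝ (a k) x) (k : ℕ) (h u : E) :
    fderiv ℝ (M (k + 1)) x h u
      = fderiv ℝ N x h (M k x u) + N x (fderiv ℝ (M k) x h u) - fderiv ℝ (a k) x h • u := by
  rw [hM.succ_fun, fderiv_fun_sub (hN.fun_mul (hM.differentiableAt hN ha k)) ((ha k).smul_const 1),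
    fderiv_fun_mul' hN (hM.differentiableAt hN ha k), fderiv_smul_const (ha k)]
  simp only [sub_apply, add_apply, smul_apply, smul_eq_mul, MulOpposite.smul_eq_mul_unop,
    MulOpposite.unop_op, ContinuousLinearMap.smulRight_apply, mul_apply_eq_comp,
    one_apply_eq_self]
  abel

/-- Antisymmetrised in `v` and `u`, the four derivative terms give `fnBracket N (M j)` on the
constant fields `v` and `u`. -/
theorem fderiv_N_compat (hM : IsHornerChain N a M) (hN : DifferentiableAt ℝ N x)
    (ha : ∀ k, DifferentiableAt ℝ (a k) x)
    (hcons : ∀ k, fderiv ℝ (a k) x = (fderiv ℝ (a 0) x).comp (M k x))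
    (hT : ∀ v w, tor N (fun _ => v) (fun _ => w) x = 0) (j : ℕ) (v u : E) :
    fderiv ℝ (M j) x (N x v) u - N x (fderiv ℝ (M j) x v u)
      - fderiv ℝ N x (M j x u) v + M j x (fderiv ℝ N x u v)
      + fderiv ℝ (a 0) x (M j x v) • u - fderiv ℝ (a 0) x v • M j x u = 0 := by
  induction j with
  | zero => simp [hM.fderiv_zero_eq_zero, hM.zero]
  | succ j ih =>
    have hIH := congrArg (N x) ih
    have hTor := (tor_const_const hN v (M j x u)).symm.trans (hT v (M j x u))
    have hNv : N x (M j x v) = M j x (N x v) := congr($(hM.commute_left j x) v)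
    simp only [map_sub, map_add, map_smul, map_zero] at hIH
    rw [hM.fderiv_succ_apply hN ha, hM.fderiv_succ_apply hN ha, hM.succ j x, hcons j]
    simp only [sub_apply, mul_apply_eq_comp, ContinuousLinearMap.comp_apply, smul_apply,
      one_apply_eq_self, map_sub, map_add, map_smul, smul_sub, smul_eq_mul, hNv]
    linear_combination (norm := module) hIH + hTor

theorem fderiv_bracket_eq_zero (hM : IsHornerChain N a M) (hN : DifferentiableAt ℝ N x)
    (ha : ∀ k, DifferentiableAt ℝ (a k) x)
    (hcons : ∀ k, fderiv ℝ (a k) x = (fderiv ℝ (a 0) x).comp (M k x))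
    (hT : ∀ v w, tor N (fun _ => v) (fun _ => w) x = 0) (i j : ℕ) (u : E) :
    fderiv ℝ (M j) x (M i x u) u - fderiv ℝ (M i) x (M j x u) u
      - M i x (fderiv ℝ (M j) x u u) + M j x (fderiv ℝ (M i) x u u) = 0 := by
  induction i with
  | zero => simp [hM.fderiv_zero_eq_zero, hM.zero]
  | succ i ih =>
    have hIH := congrArg (N x) ih
    have hK := hM.fderiv_N_compat hN ha hcons hT j (M i x u) u
    have hij : ∀ z, M i x (M j x z) = M j x (M i x z) := fun z => congr($(hM.commute i j x) z)
    have hNi : ∀ z, N x (M i x z) = M i x (N x z) := fun z => congr($(hM.commute_left i x) z)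
    have hNj : ∀ z, N x (M j x z) = M j x (N x z) := fun z => congr($(hM.commute_left j x) z)
    simp only [map_sub, map_add, map_zero] at hIH
    rw [hM.fderiv_succ_apply hN ha, hM.fderiv_succ_apply hN ha, hM.succ i x, hcons i]
    simp only [sub_apply, mul_apply_eq_comp, ContinuousLinearMap.comp_apply, smul_apply,
      one_apply_eq_self, map_sub, map_add, map_smul]
    simp only [hij, hNi, hNj] at hIH hK ⊢
    linear_combination (norm := module) hIH + hK

end IsHornerChain

theorem stmt11 (N : E → E →L[ℝ] E) (hN : ContDiff ℝ (⊤ : ℕ∞) N)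
    (hT : ∀ X Y : E → E, ContDiff ℝ (⊤ : ℕ∞) X → ContDiff ℝ (⊤ : ℕ∞) Y →
      ∀ x, tor N X Y x = 0)
    (a : ℕ → E → ℝ) (ha : ∀ k, ContDiff ℝ (⊤ : ℕ∞) (a k))
    (M : ℕ → E → E →L[ℝ] E)
    (hM0 : ∀ x, M 0 x = 1)
    (hMrec : ∀ k x, M (k + 1) x = (N x).comp (M k x) - a k x • (1 : E →L[ℝ] E))
    (hcons : ∀ k x, fderiv ℝ (a k) x = (fderiv ℝ (a 0) x).comp (M k x))
    (i j : ℕ) (X : E → E) (hX : ContDiff ℝ (⊤ : ℕ∞) X) (x : E) :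
    brX (M i) (M j) X x = 0 := by
  have hM : IsHornerChain N a M := ⟨hM0, hMrec⟩
  have hNx : DifferentiableAt ℝ N x := hN.differentiable (by simp) x
  have hax : ∀ k, DifferentiableAt ℝ (a k) x := fun k => (ha k).differentiable (by simp) x
  rw [brX_eq_of_commute (hM.differentiableAt hNx hax i) (hM.differentiableAt hNx hax j)
    (hX.differentiable (by simp) x) (hM.commute i j x)]
  exact hM.fderiv_bracket_eq_zero hNx hax (fun k => hcons k x)
    (fun v w => hT _ _ contDiff_const contDiff_const x) i j (X x)
end

section
/- Let E be a real normed vector space and N a smooth (1,1) tensor field on E with vanishing Nijenhuis torsion, T(N) = 0. Let a_k : E → ℝ, k = 0,1,2,…, be arbitrary smooth functions and define (1,1) tensor fields M_k recursively by M_0 = I (the identity) and M_{k+1} = N M_k − a_k·I (pointwise). Then for every k ≥ 1 the Haantjes tensor of M_k vanishes: H(M_k)(X,Y) = 0 for all vector fields X, Y on E. -/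
variable {E : Type*} [NormedAddCommGroup E] [NormedSpace ℝ E]

/-!
By the recursion, `M = M_k` is a polynomial `∑ bᵢ Nⁱ` in `N` with smooth coefficients `bᵢ`.
Since `T(N) = 0`, the mixed torsions `[Nⁱ X, Nʲ Y] + Nⁱ Nʲ [X, Y] − Nⁱ [X, Nʲ Y] − Nʲ [Nⁱ X, Y]`
all vanish, so by bilinearity the torsion of `M` only sees the derivatives of the coefficients:
`T(M)(U, V) = ∑ᵢ dbᵢ(MU) NⁱV − dbᵢ(U) M NⁱV − (U ↔ V)`, a tensor at each point.
Because every `Nⁱ` commutes with `M`, the Haantjes combination of each summand vanishes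
identically by pointwise linear algebra.
-/

open Finset
open scoped ContDiff

lemma lie_swap (U V : E → E) (x : E) : lie V U x = - lie U V x := by
  simp only [lie, neg_sub]

lemma lie_smul_left {b : E → ℝ} {U : E → E} (V : E → E) {x : E}
    (hb : DifferentiableAt ℝ b x) (hU : DifferentiableAt ℝ U x) :
    lie (fun y => b y • U y) V x = b x • lie U V x - fderiv ℝ b x (V x) • U x := by
  simp only [lie, fderiv_fun_smul hb hU, add_apply, smul_apply,
    ContinuousLinearMap.smulRight_apply, map_smul]
  module

lemma lie_smul_right (U : E → E) {c : E → ℝ} {V : E → E} {x : E}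
    (hc : DifferentiableAt ℝ c x) (hV : DifferentiableAt ℝ V x) :
    lie U (fun y => c y • V y) x = c x • lie U V x + fderiv ℝ c x (U x) • V x := by
  simp only [lie, fderiv_fun_smul hc hV, add_apply, smul_apply,
    ContinuousLinearMap.smulRight_apply, map_smul]
  module

lemma lie_sum_left {ι : Type*} (s : Finset ι) {U : ι → E → E} (V : E → E) {x : E}
    (hU : ∀ i ∈ s, DifferentiableAt ℝ (U i) x) :
    lie (fun y => ∑ i ∈ s, U i y) V x = ∑ i ∈ s, lie (U i) V x := by
  simp only [lie, fderiv_fun_sum hU, _root_.sum_apply, map_sum, sum_sub_distrib]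

lemma lie_sum_right {ι : Type*} (s : Finset ι) (U : E → E) {V : ι → E → E} {x : E}
    (hV : ∀ i ∈ s, DifferentiableAt ℝ (V i) x) :
    lie U (fun y => ∑ i ∈ s, V i y) x = ∑ i ∈ s, lie U (V i) x := by
  simp only [lie, fderiv_fun_sum hV, _root_.sum_apply, map_sum, sum_sub_distrib]

lemma app_smul (b : E → ℝ) (A : E → E →L[ℝ] E) (X : E → E) :
    app (fun y => b y • A y) X = fun y => b y • app A X y := rfl

lemma app_sum {ι : Type*} (s : Finset ι) (A : ι → E → E →L[ℝ] E) (X : E → E) :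
    app (fun y => ∑ i ∈ s, A i y) X = fun y => ∑ i ∈ s, app (A i) X y := by
  funext y; simp only [app, _root_.sum_apply]

lemma app_pw_zero (N : E → E →L[ℝ] E) (X : E → E) : app (pw N 0) X = X := by
  funext y; simp only [app, pw, pow_zero, one_apply_eq_self]

lemma app_pw_succ (N : E → E →L[ℝ] E) (i : ℕ) (X : E → E) :
    app (pw N (i + 1)) X = app N (app (pw N i) X) := by
  funext y; simp only [app, pw, pow_succ', mul_apply_eq_comp]

noncomputable def mixedTor (A B : E → E →L[ℝ] E) (X Y : E → E) : E → E :=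
  fun x => lie (app A X) (app B Y) x + A x (B x (lie X Y x))
    - A x (lie X (app B Y) x) - B x (lie (app A X) Y x)

lemma mixedTor_self (A : E → E →L[ℝ] E) (X Y : E → E) (x : E) :
    mixedTor A A X Y x = tor A X Y x := by
  simp only [mixedTor, tor, map_sub]
  abel

lemma mixedTor_swap {A B : E → E →L[ℝ] E} (X Y : E → E) {x : E} (h : Commute (A x) (B x)) :
    mixedTor A B X Y x = - mixedTor B A Y X x := by
  have hBA : ∀ v, B x (A x v) = A x (B x v) := fun v => by
    simpa only [mul_apply_eq_comp] using DFunLike.congr_fun h.eq.symm v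
  simp only [mixedTor, lie_swap (app A X) (app B Y), lie_swap X Y, lie_swap (app A X) Y,
    lie_swap X (app B Y), map_neg, hBA]
  abel

lemma mixedTor_pw_zero_left (N B : E → E →L[ℝ] E) (X Y : E → E) (x : E) :
    mixedTor (pw N 0) B X Y x = 0 := by
  simp only [mixedTor, app_pw_zero, pw, pow_zero, one_apply_eq_self]
  abel

lemma mixedTor_pw_zero_right (N A : E → E →L[ℝ] E) (X Y : E → E) (x : E) :
    mixedTor A (pw N 0) X Y x = 0 := by
  simp only [mixedTor, app_pw_zero, pw, pow_zero, one_apply_eq_self]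
  abel

lemma mixedTor_pw_succ_left (N B : E → E →L[ℝ] E) (i : ℕ) (X Y : E → E) (x : E) :
    mixedTor (pw N (i + 1)) B X Y x
      = mixedTor N B (app (pw N i) X) Y x + N x (mixedTor (pw N i) B X Y x) := by
  have hN : ∀ v, pw N (i + 1) x v = N x (pw N i x v) := fun v => by
    simp only [pw, pow_succ', mul_apply_eq_comp]
  simp only [mixedTor, app_pw_succ, hN, map_add, map_sub]
  abel

lemma mixedTor_smul_left {b : E → ℝ} {A : E → E →L[ℝ] E} (B : E → E →L[ℝ] E) {X : E → E}
    (Y : E → E) {x : E} (hb : DifferentiableAt ℝ b x) (hAX : DifferentiableAt ℝ (app A X) x) :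
    mixedTor (fun y => b y • A y) B X Y x
      = b x • mixedTor A B X Y x - fderiv ℝ b x (app B Y x) • app A X x
        + fderiv ℝ b x (Y x) • B x (app A X x) := by
  simp only [mixedTor, app_smul, lie_smul_left _ hb hAX, smul_apply, map_sub, map_smul]
  module

lemma mixedTor_smul_right (A : E → E →L[ℝ] E) {c : E → ℝ} {B : E → E →L[ℝ] E} (X : E → E)
    {Y : E → E} {x : E} (hc : DifferentiableAt ℝ c x) (hBY : DifferentiableAt ℝ (app B Y) x) :
    mixedTor A (fun y => c y • B y) X Y x
      = c x • mixedTor A B X Y x + fderiv ℝ c x (app A X x) • app B Y x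
        - fderiv ℝ c x (X x) • A x (app B Y x) := by
  simp only [mixedTor, app_smul, lie_smul_right _ hc hBY, smul_apply, map_add, map_smul]
  module

lemma mixedTor_sum_left {ι : Type*} (s : Finset ι) {A : ι → E → E →L[ℝ] E}
    (B : E → E →L[ℝ] E) {X : E → E} (Y : E → E) {x : E}
    (hAX : ∀ i ∈ s, DifferentiableAt ℝ (app (A i) X) x) :
    mixedTor (fun y => ∑ i ∈ s, A i y) B X Y x = ∑ i ∈ s, mixedTor (A i) B X Y x := by
  simp only [mixedTor, app_sum, lie_sum_left s _ hAX, _root_.sum_apply, map_sum,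
    sum_add_distrib, sum_sub_distrib]

lemma mixedTor_sum_right {ι : Type*} (s : Finset ι) (A : E → E →L[ℝ] E)
    {B : ι → E → E →L[ℝ] E} (X : E → E) {Y : E → E} {x : E}
    (hBY : ∀ i ∈ s, DifferentiableAt ℝ (app (B i) Y) x) :
    mixedTor A (fun y => ∑ i ∈ s, B i y) X Y x = ∑ i ∈ s, mixedTor A (B i) X Y x := by
  simp only [mixedTor, app_sum, lie_sum_right s _ hBY, _root_.sum_apply, map_sum,
    sum_add_distrib, sum_sub_distrib]

section Expansion

variable {ι : Type*} {s : Finset ι} {b : ι → E → ℝ} {P : ι → E → E →L[ℝ] E} {x : E}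
  (hb : ∀ i ∈ s, DifferentiableAt ℝ (b i) x)
include hb

lemma mixedTor_eq_sum_left {A : E → E →L[ℝ] E} (hA : ∀ y, A y = ∑ i ∈ s, b i y • P i y)
    (B : E → E →L[ℝ] E) {X : E → E} (Y : E → E)
    (hPX : ∀ i ∈ s, DifferentiableAt ℝ (app (P i) X) x) :
    mixedTor A B X Y x = ∑ i ∈ s, (b i x • mixedTor (P i) B X Y x
      - fderiv ℝ (b i) x (app B Y x) • app (P i) X x
      + fderiv ℝ (b i) x (Y x) • B x (app (P i) X x)) := by
  obtain rfl : A = fun y => ∑ i ∈ s, b i y • P i y := funext hA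
  rw [mixedTor_sum_left s (A := fun i y => b i y • P i y) B Y fun i hi =>
    (hb i hi).smul (hPX i hi)]
  exact sum_congr rfl fun i hi => mixedTor_smul_left B Y (hb i hi) (hPX i hi)

lemma mixedTor_eq_sum_right {B : E → E →L[ℝ] E} (hB : ∀ y, B y = ∑ i ∈ s, b i y • P i y)
    (A : E → E →L[ℝ] E) (X : E → E) {Y : E → E}
    (hPY : ∀ i ∈ s, DifferentiableAt ℝ (app (P i) Y) x) :
    mixedTor A B X Y x = ∑ i ∈ s, (b i x • mixedTor A (P i) X Y x
      + fderiv ℝ (b i) x (app A X x) • app (P i) Y x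
      - fderiv ℝ (b i) x (X x) • A x (app (P i) Y x)) := by
  obtain rfl : B = fun y => ∑ i ∈ s, b i y • P i y := funext hB
  rw [mixedTor_sum_right s A (B := fun i y => b i y • P i y) X fun i hi =>
    (hb i hi).smul (hPY i hi)]
  exact sum_congr rfl fun i hi => mixedTor_smul_right A X (hb i hi) (hPY i hi)

end Expansion

lemma contDiff_app {n : WithTop ℕ∞} {A : E → E →L[ℝ] E} (hA : ContDiff ℝ n A) {X : E → E}
    (hX : ContDiff ℝ n X) : ContDiff ℝ n (app A X) :=
  hA.clm_apply hX

lemma contDiff_app_pw {n : WithTop ℕ∞} {N : E → E →L[ℝ] E} (hN : ContDiff ℝ n N) (i : ℕ)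
    {X : E → E} (hX : ContDiff ℝ n X) : ContDiff ℝ n (app (pw N i) X) :=
  contDiff_app (hN.pow i) hX

/-- The contribution of a term `b • P` of `L = ∑ bᵢ Pᵢ` to the torsion of `L`, with `φ = db`,
once all mixed torsions of the `Pᵢ` vanish. -/
def coeffTorsion (L P : E →L[ℝ] E) (φ : E →L[ℝ] ℝ) (u v : E) : E :=
  φ (L u) • P v - φ (L v) • P u + φ v • L (P u) - φ u • L (P v)

lemma coeffTorsion_haantjes_eq_zero (L P : E →L[ℝ] E) (φ : E →L[ℝ] ℝ) (h : Commute P L)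
    (u v : E) :
    L (L (coeffTorsion L P φ u v)) + coeffTorsion L P φ (L u) (L v)
      - L (coeffTorsion L P φ (L u) v + coeffTorsion L P φ u (L v)) = 0 := by
  have hPL : ∀ w, P (L w) = L (P w) := fun w => by
    simpa only [mul_apply_eq_comp] using DFunLike.congr_fun h.eq w
  simp only [coeffTorsion, map_add, map_sub, map_smul, hPL]
  abel

section Nijenhuis

variable {N : E → E →L[ℝ] E} (hN : ContDiff ℝ ∞ N)
  (hT : ∀ X Y : E → E, ContDiff ℝ ∞ X → ContDiff ℝ ∞ Y → ∀ x, tor N X Y x = 0)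
include hN hT

lemma mixedTor_pw_right_eq_zero (j : ℕ) {X Y : E → E} (hX : ContDiff ℝ ∞ X)
    (hY : ContDiff ℝ ∞ Y) (x : E) : mixedTor N (pw N j) X Y x = 0 := by
  induction j with
  | zero => exact mixedTor_pw_zero_right N N X Y x
  | succ j ih =>
    rw [mixedTor_swap X Y ((Commute.refl (N x)).pow_right (j + 1)), mixedTor_pw_succ_left,
      mixedTor_self, hT _ _ (contDiff_app_pw hN j hY) hX x,
      mixedTor_swap Y X ((Commute.refl (N x)).pow_left j), ih]
    simp

lemma mixedTor_pw_pw_eq_zero (i j : ℕ) {X Y : E → E} (hX : ContDiff ℝ ∞ X)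
    (hY : ContDiff ℝ ∞ Y) (x : E) : mixedTor (pw N i) (pw N j) X Y x = 0 := by
  induction i with
  | zero => exact mixedTor_pw_zero_left N (pw N j) X Y x
  | succ i ih =>
    rw [mixedTor_pw_succ_left,
      mixedTor_pw_right_eq_zero hN hT j (contDiff_app_pw hN i hX) hY x, ih]
    simp

lemma tor_eq_sum_coeffTorsion {m : ℕ} {b : ℕ → E → ℝ} (hb : ∀ i, ContDiff ℝ ∞ (b i))
    {M : E → E →L[ℝ] E}
    (hM : ∀ y, M y = ∑ i ∈ range m, b i y • pw N i y) {U V : E → E}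
    (hU : ContDiff ℝ ∞ U) (hV : ContDiff ℝ ∞ V) (x : E) :
    tor M U V x =
      ∑ i ∈ range m, coeffTorsion (M x) (pw N i x) (fderiv ℝ (b i) x) (U x) (V x) := by
  have hbx : ∀ i ∈ range m, DifferentiableAt ℝ (b i) x := fun i _ =>
    (hb i).contDiffAt.differentiableAt (by simp)
  have hPU : ∀ i ∈ range m, DifferentiableAt ℝ (app (pw N i) U) x := fun i _ =>
    (contDiff_app_pw hN i hU).contDiffAt.differentiableAt (by simp)
  have hPV : ∀ i ∈ range m, DifferentiableAt ℝ (app (pw N i) V) x := fun i _ =>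
    (contDiff_app_pw hN i hV).contDiffAt.differentiableAt (by simp)
  have inner : ∀ i, mixedTor (pw N i) M U V x = ∑ j ∈ range m,
      (fderiv ℝ (b j) x (pw N i x (U x)) • pw N j x (V x)
        - fderiv ℝ (b j) x (U x) • pw N i x (pw N j x (V x))) := by
    intro i
    rw [mixedTor_eq_sum_right hbx hM _ _ hPV]
    refine sum_congr rfl fun j _ => ?_
    rw [mixedTor_pw_pw_eq_zero hN hT i j hU hV, smul_zero, zero_add]
    rfl
  -- re-sum over `i` using `M x = ∑ bᵢ(x) Nⁱ(x)`
  have regroup : ∑ i ∈ range m, b i x • ∑ j ∈ range m,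
      (fderiv ℝ (b j) x (pw N i x (U x)) • pw N j x (V x)
        - fderiv ℝ (b j) x (U x) • pw N i x (pw N j x (V x)))
      = ∑ j ∈ range m, (fderiv ℝ (b j) x (M x (U x)) • pw N j x (V x)
        - fderiv ℝ (b j) x (U x) • M x (pw N j x (V x))) := by
    simp_rw [smul_sum]
    rw [sum_comm]
    refine sum_congr rfl fun j _ => ?_
    simp only [hM x, _root_.sum_apply, smul_apply, map_sum, map_smul, smul_sub, sum_sub_distrib,
      sum_smul, smul_sum, smul_smul, smul_eq_mul, mul_comm]
  rw [← mixedTor_self, mixedTor_eq_sum_left hbx hM M V hPU]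
  rw [sum_congr rfl fun i _ => by rw [inner i], sum_add_distrib, sum_sub_distrib, regroup]
  simp only [coeffTorsion, app, sum_add_distrib, sum_sub_distrib]
  abel

lemma haan_eq_zero_of_eq_sum_smul_pw {m : ℕ} {b : ℕ → E → ℝ} (hb : ∀ i, ContDiff ℝ ∞ (b i))
    {M : E → E →L[ℝ] E}
    (hM : ∀ y, M y = ∑ i ∈ range m, b i y • pw N i y) {X Y : E → E}
    (hX : ContDiff ℝ ∞ X) (hY : ContDiff ℝ ∞ Y) (x : E) :
    haan M X Y x = 0 := by
  have hMc : ContDiff ℝ ∞ M := by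
    rw [funext hM]
    exact ContDiff.sum fun i _ => (hb i).smul (hN.pow i)
  have hcomm : ∀ i, Commute (pw N i x) (M x) := fun i => by
    rw [hM x]
    exact Commute.sum_right _ _ _ fun j _ => (Commute.pow_pow_self (N x) i j).smul_right _
  simp only [haan, tor_eq_sum_coeffTorsion hN hT hb hM hX hY,
    tor_eq_sum_coeffTorsion hN hT hb hM (contDiff_app hMc hX) (contDiff_app hMc hY),
    tor_eq_sum_coeffTorsion hN hT hb hM (contDiff_app hMc hX) hY,
    tor_eq_sum_coeffTorsion hN hT hb hM hX (contDiff_app hMc hY), app, map_sum,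
    ← sum_add_distrib, ← sum_sub_distrib]
  exact sum_eq_zero fun i _ => coeffTorsion_haantjes_eq_zero _ _ _ (hcomm i) _ _

end Nijenhuis

lemma exists_eq_sum_smul_pw (N : E → E →L[ℝ] E) {a : ℕ → E → ℝ}
    (ha : ∀ k, ContDiff ℝ ∞ (a k)) {M : ℕ → E → E →L[ℝ] E} (hM0 : ∀ x, M 0 x = 1)
    (hMrec : ∀ k x, M (k + 1) x = (N x).comp (M k x) - a k x • (1 : E →L[ℝ] E)) (k : ℕ) :
    ∃ b : ℕ → E → ℝ, (∀ i, ContDiff ℝ ∞ (b i)) ∧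
      ∀ y, M k y = ∑ i ∈ range (k + 1), b i y • pw N i y := by
  induction k with
  | zero => exact ⟨fun _ _ => 1, fun _ => contDiff_const, fun y => by simp [hM0 y, pw]⟩
  | succ k ih =>
    obtain ⟨b, hb, hMk⟩ := ih
    refine ⟨fun i => if i = 0 then -a k else b (i - 1), fun i => ?_, fun y => ?_⟩
    · dsimp only
      split
      · exact (ha k).neg
      · exact hb _
    · rw [hMrec k y, hMk y, ← ContinuousLinearMap.mul_def, mul_sum, sum_range_succ' _ (k + 1)]
      simp [pw, ← pow_succ', sub_eq_add_neg]

theorem stmt17_general (N : E → E →L[ℝ] E) (hN : ContDiff ℝ (⊤ : ℕ∞) N)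
    (hT : ∀ X Y : E → E, ContDiff ℝ (⊤ : ℕ∞) X → ContDiff ℝ (⊤ : ℕ∞) Y →
      ∀ x, tor N X Y x = 0)
    (a : ℕ → E → ℝ) (ha : ∀ k, ContDiff ℝ (⊤ : ℕ∞) (a k))
    (M : ℕ → E → E →L[ℝ] E)
    (hM0 : ∀ x, M 0 x = 1)
    (hMrec : ∀ k x, M (k + 1) x = (N x).comp (M k x) - a k x • (1 : E →L[ℝ] E))
    (k : ℕ)
    (X Y : E → E) (hX : ContDiff ℝ (⊤ : ℕ∞) X) (hY : ContDiff ℝ (⊤ : ℕ∞) Y) (x : E) :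
    haan (M k) X Y x = 0 := by
  obtain ⟨b, hb, hMk⟩ := exists_eq_sum_smul_pw N ha hM0 hMrec k
  exact haan_eq_zero_of_eq_sum_smul_pw hN hT hb hMk hX hY x

theorem stmt17 (N : E → E →L[ℝ] E) (hN : ContDiff ℝ (⊤ : ℕ∞) N)
    (hT : ∀ X Y : E → E, ContDiff ℝ (⊤ : ℕ∞) X → ContDiff ℝ (⊤ : ℕ∞) Y →
      ∀ x, tor N X Y x = 0)
    (a : ℕ → E → ℝ) (ha : ∀ k, ContDiff ℝ (⊤ : ℕ∞) (a k))
    (M : ℕ → E → E →L[ℝ] E)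
    (hM0 : ∀ x, M 0 x = 1)
    (hMrec : ∀ k x, M (k + 1) x = (N x).comp (M k x) - a k x • (1 : E →L[ℝ] E))
    (k : ℕ) (hk : 1 ≤ k)
    (X Y : E → E) (hX : ContDiff ℝ (⊤ : ℕ∞) X) (hY : ContDiff ℝ (⊤ : ℕ∞) Y) (x : E) :
    haan (M k) X Y x = 0 :=
  stmt17_general N hN hT a ha M hM0 hMrec k X Y hX hY x
end
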